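/- arXiv:1408.1073 — 2 statements merged into one kernel-verified Lean document; each statement's English description precedes it below -/
import Mathlib

section
/- Let m, n, p be positive natural numbers, let X₁, …, X_m be real n × p matrices, let y₁, …, y_m be vectors in ℝⁿ, and let ε ≥ 0. Then the set {β ∈ ℝᵖ : ‖(X₁ + ⋯ + X_m)β − (y₁ + ⋯ + y_m)‖₂ ≤ ε} is equal to the set {β ∈ ℝᵖ : there exist vectors α₁, …, α_m ∈ ℝⁿ with α₁ + ⋯ + α_m = 0 such that ‖Xᵢβ − yᵢ + αᵢ‖₂ ≤ ε/m for every i = 1, …, m}. -/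
/-- Proposition 1: the coupled residual-norm constraint equals the separated
per-agent constraints with zero-sum auxiliary vectors. -/
theorem stmt_0 (m n p : ℕ) (hm : 0 < m) (hn : 0 < n) (hp : 0 < p)
    (X : Fin m → Matrix (Fin n) (Fin p) ℝ)
    (y : Fin m → EuclideanSpace ℝ (Fin n)) (ε : ℝ) (hε : 0 ≤ ε) :
    {β : EuclideanSpace ℝ (Fin p) |
        ‖(Matrix.toEuclideanLin (∑ i, X i) β - ∑ i, y i)‖ ≤ ε} =
      {β : EuclideanSpace ℝ (Fin p) |
        ∃ α : Fin m → EuclideanSpace ℝ (Fin n), ∑ i, α i = 0 ∧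
          ∀ i, ‖(Matrix.toEuclideanLin (X i) β - y i + α i)‖ ≤ ε / m} := by
  have hm' : (0:ℝ) < m := by exact_mod_cast hm
  ext β
  have hsum : Matrix.toEuclideanLin (∑ i, X i) β - ∑ i, y i
      = ∑ i, (Matrix.toEuclideanLin (X i) β - y i) := by
    rw [map_sum]
    simp [Finset.sum_sub_distrib, LinearMap.sum_apply]
  constructor
  · intro hβ
    set r : EuclideanSpace ℝ (Fin n) :=
      Matrix.toEuclideanLin (∑ i, X i) β - ∑ i, y i with hr
    refine ⟨fun i => -(Matrix.toEuclideanLin (X i) β - y i) + (m : ℝ)⁻¹ • r, ?_, ?_⟩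
    · rw [Finset.sum_add_distrib, Finset.sum_neg_distrib, Finset.sum_const,
        Finset.card_univ, Fintype.card_fin, ← hsum]
      rw [← Nat.cast_smul_eq_nsmul ℝ, smul_smul, mul_inv_cancel₀ hm'.ne', one_smul]
      simp
    · intro i
      have : Matrix.toEuclideanLin (X i) β - y i +
          (-(Matrix.toEuclideanLin (X i) β - y i) + (m : ℝ)⁻¹ • r)
          = (m : ℝ)⁻¹ • r := by abel
      rw [this, norm_smul]
      simp only [norm_inv, Real.norm_natCast]
      rw [div_eq_inv_mul]
      exact mul_le_mul_of_nonneg_left hβ (by positivity)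
  · rintro ⟨α, hα0, hα⟩
    have : Matrix.toEuclideanLin (∑ i, X i) β - ∑ i, y i
        = ∑ i, (Matrix.toEuclideanLin (X i) β - y i + α i) := by
      rw [hsum, Finset.sum_add_distrib, hα0, add_zero]
    simp only [Set.mem_setOf_eq]
    rw [this]
    calc ‖∑ i, (Matrix.toEuclideanLin (X i) β - y i + α i)‖
        ≤ ∑ i : Fin m, ‖Matrix.toEuclideanLin (X i) β - y i + α i‖ :=
          norm_sum_le _ _
      _ ≤ ∑ _i : Fin m, ε / m := Finset.sum_le_sum fun i _ => hα i
      _ = ε := by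
          rw [Finset.sum_const, Finset.card_univ, Fintype.card_fin, nsmul_eq_mul]
          field_simp
end

section
/- Let m, n, p be positive natural numbers, let X₁, …, X_m be real n × p matrices, let y₁, …, y_m be vectors in ℝⁿ, let ε ≥ 0, and let f : ℝᵖ → ℝ be any function. Then the infimum of f over the set {β ∈ ℝᵖ : ‖(X₁ + ⋯ + X_m)β − (y₁ + ⋯ + y_m)‖₂ ≤ ε} equals the infimum of f over the set {β ∈ ℝᵖ : there exist α₁, …, α_m ∈ ℝⁿ with α₁ + ⋯ + α_m = 0 and ‖Xᵢβ − yᵢ + αᵢ‖₂ ≤ ε/m for all i}; moreover β is a minimizer of f over the first set if and only if it is a minimizer of f over the second set. -/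
/-- Equivalence of P₁ and its reformulation: equal infima (in the extended
reals) and the same minimizers. -/
theorem stmt_7 (m n p : ℕ) (hm : 0 < m) (hn : 0 < n) (hp : 0 < p)
    (X : Fin m → Matrix (Fin n) (Fin p) ℝ)
    (y : Fin m → EuclideanSpace ℝ (Fin n)) (ε : ℝ) (hε : 0 ≤ ε)
    (f : EuclideanSpace ℝ (Fin p) → ℝ) :
    (⨅ β ∈ {β : EuclideanSpace ℝ (Fin p) |
          ‖(Matrix.toEuclideanLin (∑ i, X i) β - ∑ i, y i)‖ ≤ ε},
        (f β : EReal)) =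
      (⨅ β ∈ {β : EuclideanSpace ℝ (Fin p) |
          ∃ α : Fin m → EuclideanSpace ℝ (Fin n), ∑ i, α i = 0 ∧
            ∀ i, ‖(Matrix.toEuclideanLin (X i) β - y i + α i)‖ ≤ ε / m},
        (f β : EReal)) ∧
    ∀ β : EuclideanSpace ℝ (Fin p),
      (‖(Matrix.toEuclideanLin (∑ i, X i) β - ∑ i, y i)‖ ≤ ε ∧
        ∀ γ : EuclideanSpace ℝ (Fin p),
          ‖(Matrix.toEuclideanLin (∑ i, X i) γ - ∑ i, y i)‖ ≤ ε → f β ≤ f γ) ↔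
      ((∃ α : Fin m → EuclideanSpace ℝ (Fin n), ∑ i, α i = 0 ∧
          ∀ i, ‖(Matrix.toEuclideanLin (X i) β - y i + α i)‖ ≤ ε / m) ∧
        ∀ γ : EuclideanSpace ℝ (Fin p),
          (∃ α : Fin m → EuclideanSpace ℝ (Fin n), ∑ i, α i = 0 ∧
            ∀ i, ‖(Matrix.toEuclideanLin (X i) γ - y i + α i)‖ ≤ ε / m) →
          f β ≤ f γ) := by
  have hm' : (m : ℝ) ≠ 0 := Nat.cast_ne_zero.mpr hm.ne'
  have hsum : ∀ β : EuclideanSpace ℝ (Fin p),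
      Matrix.toEuclideanLin (∑ i, X i) β - ∑ i, y i
        = ∑ i, (Matrix.toEuclideanLin (X i) β - y i) := by
    intro β
    rw [Finset.sum_sub_distrib, map_sum]
    simp [LinearMap.sum_apply]
  have key : ∀ β : EuclideanSpace ℝ (Fin p),
      ‖(Matrix.toEuclideanLin (∑ i, X i) β - ∑ i, y i)‖ ≤ ε ↔
      ∃ α : Fin m → EuclideanSpace ℝ (Fin n), ∑ i, α i = 0 ∧
        ∀ i, ‖(Matrix.toEuclideanLin (X i) β - y i + α i)‖ ≤ ε / m := by
    intro β
    rw [hsum]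
    set S : EuclideanSpace ℝ (Fin n) := ∑ i, (Matrix.toEuclideanLin (X i) β - y i) with hS
    constructor
    · intro h
      refine ⟨fun i => (m : ℝ)⁻¹ • S - (Matrix.toEuclideanLin (X i) β - y i), ?_, ?_⟩
      · rw [Finset.sum_sub_distrib, ← hS, Finset.sum_const, Finset.card_univ,
          Fintype.card_fin, ← Nat.cast_smul_eq_nsmul ℝ, smul_smul, mul_inv_cancel₀ hm', one_smul, sub_self]
      · intro i
        have : Matrix.toEuclideanLin (X i) β - y i +
            ((m : ℝ)⁻¹ • S - (Matrix.toEuclideanLin (X i) β - y i)) = (m : ℝ)⁻¹ • S := by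
          abel
        rw [this, norm_smul]
        simp only [norm_inv, Real.norm_natCast]
        rw [div_eq_inv_mul]
        exact mul_le_mul_of_nonneg_left h (by positivity)
    · rintro ⟨α, hα0, hα⟩
      have : S = ∑ i, (Matrix.toEuclideanLin (X i) β - y i + α i) := by
        rw [Finset.sum_add_distrib, hα0, add_zero]
      rw [this]
      calc ‖∑ i, (Matrix.toEuclideanLin (X i) β - y i + α i)‖
          ≤ ∑ i, ‖Matrix.toEuclideanLin (X i) β - y i + α i‖ := norm_sum_le _ _
        _ ≤ ∑ _i : Fin m, (ε / m) := Finset.sum_le_sum fun i _ => hα i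
        _ = ε := by
            rw [Finset.sum_const, Finset.card_univ, Fintype.card_fin, nsmul_eq_mul]
            field_simp
  constructor
  · apply iInf_congr
    intro β
    rw [show ({β : EuclideanSpace ℝ (Fin p) |
          ‖(Matrix.toEuclideanLin (∑ i, X i) β - ∑ i, y i)‖ ≤ ε} : Set _)
        = {β : EuclideanSpace ℝ (Fin p) |
          ∃ α : Fin m → EuclideanSpace ℝ (Fin n), ∑ i, α i = 0 ∧
            ∀ i, ‖(Matrix.toEuclideanLin (X i) β - y i + α i)‖ ≤ ε / m}
      from Set.ext fun β => key β]
  · intro β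
    constructor
    · rintro ⟨h1, h2⟩
      exact ⟨(key β).mp h1, fun γ hγ => h2 γ ((key γ).mpr hγ)⟩
    · rintro ⟨h1, h2⟩
      exact ⟨(key β).mpr h1, fun γ hγ => h2 γ ((key γ).mp hγ)⟩
end
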